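/- Let κ < μ < λ be cardinals with κ = cf(μ), θ < κ, and assume: 2^κ < cf(λ); J is an ideal on κ extending the bounded ideal; ⟨λ_ε : ε < κ⟩ is an increasing sequence of strongly inaccessible cardinals cofinal in μ with 2^{λ_ε} = λ_ε⁺ for each ε; the true cofinalities Υ₀ = tcf(∏_ε λ_ε, <_J) and Υ₁ = tcf(∏_ε λ_ε⁺, <_J) exist; and cf(λ) ∉ {Υ₀, Υ₁}. Then the polarized relation (λ, μ) → (λ, μ)^{1,1}_θ holds: for every c : λ × μ → θ there exist A ⊆ λ, B ⊆ μ with |A| = λ, |B| = μ, and c constant on A × B. -/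

import Mathlib

open Cardinal Set

noncomputable section

/-- The canonical type of cardinality `c`: the order type of `c.ord`. -/
abbrev OT (c : Cardinal) : Type _ := c.ord.ToType

/-- `S` splits `B` (as subsets of a set of size `lam`). -/
def Splits (lam : Cardinal) (S B : Set (OT lam)) : Prop :=
  #(↥(S ∩ B)) = lam ∧ #(↥(B \ S)) = lam

/-- A splitting family on `lam`. -/
def IsSplittingFamily (lam : Cardinal) (F : Set (Set (OT lam))) : Prop :=
  ∀ B : Set (OT lam), #B = lam → ∃ S ∈ F, Splits lam S B

/-- The splitting number `𝔰_lam`. -/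
def splittingNumber (lam : Cardinal) : Cardinal :=
  sInf { κ | ∃ F : Set (Set (OT lam)), #F = κ ∧ IsSplittingFamily lam F }

/-- An unreaped family on `lam`. -/
def IsUnreaped (lam : Cardinal) (F : Set (Set (OT lam))) : Prop :=
  (∀ A ∈ F, #A = lam) ∧
  ¬ ∃ S : Set (OT lam), #S = lam ∧ ∀ A ∈ F, Splits lam S A

/-- The reaping number `𝔯_lam`. -/
def reapingNumber (lam : Cardinal) : Cardinal :=
  sInf { κ | ∃ F : Set (Set (OT lam)), #F = κ ∧ IsUnreaped lam F }

/-- The strong polarized relation `(μ, lam) → (μ, lam)^{1,1}_2`. -/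
def StrongPolarized (μ lam : Cardinal) : Prop :=
  ∀ c : OT μ → OT lam → Fin 2,
    ∃ (A : Set (OT μ)) (B : Set (OT lam)) (i : Fin 2),
      #A = μ ∧ #B = lam ∧ ∀ α ∈ A, ∀ β ∈ B, c α β = i

end

/-- `J` is a (proper) ideal on the type `K`. -/
def IsIdealOn (K : Type*) (J : Set (Set K)) : Prop :=
  ∅ ∈ J ∧ (∀ s t : Set K, s ⊆ t → t ∈ J → s ∈ J) ∧
  (∀ s t : Set K, s ∈ J → t ∈ J → s ∪ t ∈ J) ∧ Set.univ ∉ J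

/-- `f <_J g` for functions into the ordinals. -/
def LtIdeal {K : Type*} (J : Set (Set K)) (f g : K → Ordinal) : Prop :=
  {ε : K | g ε ≤ f ε} ∈ J

/-- `f` is a member of the product `∏_ε ν ε`. -/
def InProd {K : Type*} (ν : K → Cardinal) (f : K → Ordinal) : Prop :=
  ∀ ε : K, f ε < (ν ε).ord

/-- `Υ = tcf(∏_ε ν ε, <_J)`: there is a `<_J`-increasing cofinal sequence of
length `Υ` in the product, with `Υ` regular. -/
def IsTrueCofinality {K : Type*} (J : Set (Set K)) (ν : K → Cardinal)
    (Υ : Cardinal) : Prop :=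
  Υ.IsRegular ∧ ∃ h : OT Υ → K → Ordinal,
    (∀ i, InProd ν (h i)) ∧
    (∀ i i' : OT Υ, i < i' → LtIdeal J (h i) (h i')) ∧
    (∀ f, InProd ν f → ∃ i, LtIdeal J f (h i))
/-!
The row `c α ↾ B_ε` of a colouring on a block `B_ε ⊆ μ` of size `λ_ε` is one of
`θ ^ λ_ε = 2 ^ λ_ε = λ_ε⁺` functions, so it can be coded by an ordinal below `λ_ε⁺`. Since
`cf λ ≠ Υ₁`, `λ` many of these codes lie below a single member of the scale in `∏ λ_ε⁺`, and since
`2 ^ κ < cf λ` we may assume that they do so off a common set in `J`. For these `λ` many `α` and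
`J`-almost every `ε`, the rows at `ε` take at most `λ_ε` values; repeating the argument with the
scale in `∏ λ_ε`, of length `Υ₀ ≠ cf λ`, leaves fewer than `λ_ε` values. As `λ_ε` is inaccessible,
a subset of `B_ε` of size `λ_ε` is homogeneous for all these rows at once. Two more pigeonholes, on
the `κ`-sequences of colours of these homogeneous sets (`θ ^ κ ≤ 2 ^ κ < cf λ`) and on one colour
(`θ < κ = cf κ`), give `A` and, as the union of unboundedly many homogeneous sets, `B`.
-/

universe u

open Order

section Ideal

variable {K : Type*} {J : Set (Set K)}

theorem IsIdealOn.mono (hJ : IsIdealOn K J) {s t : Set K} (hst : s ⊆ t) (ht : t ∈ J) : s ∈ J :=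
  hJ.2.1 s t hst ht

theorem IsIdealOn.union_mem (hJ : IsIdealOn K J) {s t : Set K} (hs : s ∈ J) (ht : t ∈ J) :
    s ∪ t ∈ J :=
  hJ.2.2.1 s t hs ht

theorem IsIdealOn.unbounded_compl [Preorder K] (hJ : IsIdealOn K J)
    (hbd : ∀ s : Set K, Bounded (· ≤ ·) s → s ∈ J) {Z : Set K} (hZ : Z ∈ J) :
    Unbounded (· ≤ ·) Zᶜ := by
  rw [← not_bounded_iff]
  intro h
  simpa using hJ.2.2.2 (by simpa using hJ.union_mem hZ (hbd _ h))

theorem LtIdeal.trans (hJ : IsIdealOn K J) {f g h : K → Ordinal} (hfg : LtIdeal J f g)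
    (hgh : LtIdeal J g h) : LtIdeal J f h := by
  refine hJ.mono (fun ε hε => ?_) (hJ.union_mem hfg hgh)
  rcases le_or_gt (g ε) (f ε) with hgf | hfg
  · exact .inl hgf
  · exact .inr (le_trans hε hfg.le)

end Ideal

theorem Cardinal.IsRegular.cof_toType {Υ : Cardinal} (hΥ : Υ.IsRegular) :
    Order.cof Υ.ord.ToType = Υ := by
  rw [Ordinal.cof_toType, hΥ.cof_ord]

theorem exists_forall_lt_of_mk_lt_cof {ι : Type*} [LinearOrder ι] {s : Set ι}
    (hs : #s < Order.cof ι) : ∃ x, ∀ y ∈ s, y < x :=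
  not_isCofinal_iff.mp fun h => (cof_le h).not_gt hs

theorem Cardinal.IsStrongLimit.power_lt {c a b : Cardinal} (hc : c.IsStrongLimit) (ha : a < c)
    (hb : b < c) : a ^ b < c :=
  calc a ^ b ≤ (2 ^ a) ^ b := power_le_power_right (cantor a).le
    _ = 2 ^ (a * b) := power_mul.symm
    _ < c := hc.isStrongPrelimit (mul_lt_of_lt hc.aleph0_le ha hb)

theorem exists_mk_fiber_eq {α T : Type u} {A : Set α} {lam : Cardinal.{u}} (hA : #A = lam)
    (hlam : ℵ₀ ≤ lam) (F : α → T) (hT : #T < lam.ord.cof) :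
    ∃ t, #{a ∈ A | F a = t} = lam := by
  subst hA
  obtain ⟨t, ht⟩ := infinite_pigeonhole (fun a : A => F a) hlam hT
  exact ⟨t, by rw [mk_sep]; exact ht⟩

theorem Cardinal.exists_family_cofinal_lt (lam : Cardinal.{u}) :
    ∃ (ι : Type u) (f : ι → Cardinal.{u}), #ι = lam.ord.cof ∧ (∀ i, f i < lam) ∧
      ∀ ν < lam, ∃ i, ν ≤ f i := by
  obtain ⟨D, hD, hDcard⟩ := Order.exists_cof_eq lam.ord.ToType
  refine ⟨D, fun d => Ordinal.card (d.1 : Ordinal), by rw [hDcard, Ordinal.cof_toType],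
    fun d => lt_ord.mp (Ordinal.ToType.toOrd d.1).2, fun ν hν => ?_⟩
  obtain ⟨d, hdD, hd⟩ := hD (Ordinal.ToType.mk ⟨ν.ord, ord_lt_ord.mpr hν⟩)
  refine ⟨⟨d, hdD⟩, ord_le.mp ?_⟩
  have h := Ordinal.ToType.mk.symm.monotone hd
  rw [OrderIso.symm_apply_apply] at h
  exact h

theorem exists_mk_sep_lt_eq_of_cof_lt {α : Type u} {A : Set α} {lam Υ : Cardinal.{u}}
    (hA : #A = lam) (hlam : ℵ₀ ≤ lam) (hΥ : Υ.IsRegular) (hcof : lam.ord.cof < Υ)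
    (hΥlam : Υ < lam) (F : α → OT Υ) : ∃ j, #{a ∈ A | F a < j} = lam := by
  have := Cardinal.noMaxOrder hΥ.aleph0_le
  by_contra! hsmall
  have hlt : ∀ j, #{a ∈ A | F a < j} < lam := fun j =>
    (hA ▸ mk_le_mk_of_subset (sep_subset _ _)).lt_of_ne (hsmall j)
  have hunb : ∀ ν < lam, ∃ j, ν < #{a ∈ A | F a < j} := by
    intro ν hν
    by_contra! hle
    have hcover : A ⊆ ⋃ j, {a ∈ A | F a < j} := fun a ha =>
      let ⟨j, hj⟩ := exists_gt (F a); mem_iUnion.2 ⟨j, ha, hj⟩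
    have : lam ≤ Υ * ν :=
      calc lam = #A := hA.symm
        _ ≤ #(OT Υ) * ⨆ j, #{a ∈ A | F a < j} := (mk_le_mk_of_subset hcover).trans (mk_iUnion_le _)
        _ ≤ Υ * ν := by rw [mk_ord_toType]; exact mul_le_mul' le_rfl (ciSup_le' hle)
    exact this.not_gt (mul_lt_of_lt hlam hΥlam hν)
  obtain ⟨ι, f, hι, hf, hcofinal⟩ := lam.exists_family_cofinal_lt
  choose j hj using fun i => hunb (f i) (hf i)
  obtain ⟨b, hb⟩ := exists_forall_lt_of_mk_lt_cof (s := range j) <| by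
    rw [hΥ.cof_toType]; exact mk_range_le.trans_lt (hι ▸ hcof)
  obtain ⟨i, hi⟩ := hcofinal _ (hlt b)
  exact (hi.trans_lt (hj i)).not_ge <| mk_le_mk_of_subset fun a ⟨ha, h⟩ =>
    ⟨ha, h.trans (hb _ (mem_range_self i))⟩

theorem exists_mk_sep_lt_eq {α : Type u} {A : Set α} {lam Υ : Cardinal.{u}} (hA : #A = lam)
    (hlam : ℵ₀ ≤ lam) (hΥ : Υ.IsRegular) (hne : lam.ord.cof ≠ Υ) (F : α → OT Υ) :
    ∃ j, #{a ∈ A | F a < j} = lam := by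
  have := Cardinal.noMaxOrder hΥ.aleph0_le
  rcases hne.lt_or_gt with hcof | hcof
  · rcases lt_or_ge lam Υ with hlt | hle
    · obtain ⟨j, hj⟩ := exists_forall_lt_of_mk_lt_cof (s := F '' A) <| by
        rw [hΥ.cof_toType]; exact mk_image_le.trans_lt (hA ▸ hlt)
      refine ⟨j, ?_⟩
      rwa [sep_eq_self_iff_mem_true.mpr fun a ha => hj _ (mem_image_of_mem F ha)]
    · refine exists_mk_sep_lt_eq_of_cof_lt hA hlam hΥ hcof (hle.lt_of_ne ?_) F
      rintro rfl
      exact hne hΥ.cof_ord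
  · obtain ⟨j, hj⟩ := exists_mk_fiber_eq hA hlam F (by rwa [mk_ord_toType])
    obtain ⟨j', hj'⟩ := exists_gt j
    refine ⟨j', le_antisymm (hA ▸ mk_le_mk_of_subset (sep_subset _ _)) ?_⟩
    exact hj ▸ mk_le_mk_of_subset fun a ⟨ha, hFa⟩ => ⟨ha, hFa ▸ hj'⟩

theorem exists_injOn_lt_ord {β : Type u} (s : Set β) {c : Cardinal.{u}} (hc : c ≠ 0) :
    ∃ e : β → Ordinal.{u}, (∀ x, e x < c.ord) ∧ (#s ≤ c → InjOn e s) := by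
  classical
  have hc' : 0 < c.ord := by rwa [ord_pos, pos_iff_ne_zero]
  by_cases hs : #s ≤ c
  · obtain ⟨emb⟩ : Nonempty (s ↪ c.ord.ToType) := by rwa [← le_def, mk_ord_toType]
    refine ⟨fun x => if hx : x ∈ s then (emb ⟨x, hx⟩ : Ordinal) else 0, fun x => ?_,
      fun _ x hx y hy hxy => ?_⟩
    · dsimp only
      split_ifs
      exacts [(Ordinal.ToType.toOrd _).2, hc']
    · simp only [dif_pos hx, dif_pos hy] at hxy
      exact congrArg Subtype.val
        (emb.injective (Ordinal.ToType.mk.symm.injective (Subtype.ext hxy)))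
  · exact ⟨fun _ => 0, fun _ => hc', fun h => absurd h hs⟩

theorem mk_le_card_of_injOn {β : Type u} {s : Set β} {e : β → Ordinal.{u}} {o : Ordinal.{u}}
    (he : InjOn e s) (hlt : ∀ x ∈ s, e x < o) : #s ≤ o.card :=
  calc #s ≤ #o.ToType := mk_le_of_injective (f := fun x : s => Ordinal.ToType.mk ⟨e x, hlt x x.2⟩)
        fun x y hxy => Subtype.ext (he x.2 y.2 (congrArg Subtype.val
          (Ordinal.ToType.mk.injective hxy)))
    _ = o.card := mk_toType o

section TrueCofinality

variable {K α : Type u} {J : Set (Set K)} {ν : K → Cardinal.{u}} {Υ lam : Cardinal.{u}}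

theorem IsTrueCofinality.ne_zero (hΥ : IsTrueCofinality J ν Υ) (ε : K) : ν ε ≠ 0 := by
  obtain ⟨hreg, h, hh, -⟩ := hΥ
  obtain ⟨i⟩ : Nonempty (OT Υ) := by rw [← mk_ne_zero_iff, mk_ord_toType]; exact hreg.ne_zero
  rintro h0
  simpa [h0] using hh i ε

theorem IsTrueCofinality.exists_large_bounded (hJ : IsIdealOn K J)
    (hΥ : IsTrueCofinality J ν Υ) (hlam : ℵ₀ ≤ lam) (hne : lam.ord.cof ≠ Υ)
    (hK : 2 ^ #K < lam.ord.cof) {A : Set α} (hA : #A = lam) (g : α → K → Ordinal)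
    (hg : ∀ a, InProd ν (g a)) :
    ∃ b, InProd ν b ∧ ∃ A' ⊆ A, #A' = lam ∧ ∃ Z ∈ J, ∀ a ∈ A', ∀ ε ∉ Z, g a ε < b ε := by
  obtain ⟨hreg, h, hh, hmono, hcof⟩ := hΥ
  choose i hi using fun a => hcof _ (hg a)
  obtain ⟨j, hj⟩ := exists_mk_sep_lt_eq hA hlam hreg hne i
  obtain ⟨Z, hZ⟩ := exists_mk_fiber_eq hj hlam (fun a => {ε | h j ε ≤ g a ε}) (by rwa [mk_set])
  obtain ⟨a, ⟨-, hij⟩, rfl⟩ : Set.Nonempty {a ∈ {a ∈ A | i a < j} | {ε | h j ε ≤ g a ε} = Z} := by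
    rw [← nonempty_coe_sort, ← mk_ne_zero_iff, hZ]; exact (aleph0_pos.trans_le hlam).ne'
  refine ⟨h j, hh j, _, fun a ha => ha.1.1, hZ, _, (hi a).trans hJ (hmono _ _ hij), ?_⟩
  rintro a' ⟨-, ha'⟩ ε hε
  rw [← ha'] at hε
  exact not_le.mp hε

theorem IsTrueCofinality.exists_large_subset_mk_image_lt (hJ : IsIdealOn K J)
    (hΥ : IsTrueCofinality J ν Υ) (hlam : ℵ₀ ≤ lam) (hne : lam.ord.cof ≠ Υ)
    (hK : 2 ^ #K < lam.ord.cof) {R : K → Type u} (r : α → (ε : K) → R ε) {A : Set α}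
    (hA : #A = lam) (hR : {ε | ν ε < #((r · ε) '' A)} ∈ J) :
    ∃ A' ⊆ A, #A' = lam ∧ {ε | ν ε ≤ #((r · ε) '' A')} ∈ J := by
  choose e he_lt he_inj using fun ε => exists_injOn_lt_ord ((r · ε) '' A) (hΥ.ne_zero ε)
  obtain ⟨b, hb, A', hA'A, hA', Z, hZ, hgb⟩ :=
    hΥ.exists_large_bounded hJ hlam hne hK hA (fun a ε => e ε (r a ε)) fun a ε => he_lt ε _
  refine ⟨A', hA'A, hA', hJ.mono (fun ε hε => ?_) (hJ.union_mem hZ hR)⟩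
  by_contra hε'
  simp only [mem_union, mem_ofPred_eq, not_or, not_lt] at hε hε'
  have hle := mk_le_card_of_injOn ((he_inj ε hε'.2).mono (image_mono hA'A)) (o := b ε)
    (by rintro _ ⟨a, ha, rfl⟩; exact hgb a ha ε hε'.1)
  exact hε.not_gt (hle.trans_lt (lt_ord.mp (hb ε)))

theorem IsTrueCofinality.exists_large_subset_mk_image_lt_of_succ {Υ₀ Υ₁ : Cardinal.{u}}
    (hJ : IsIdealOn K J) (hT₀ : IsTrueCofinality J ν Υ₀) (hT₁ : IsTrueCofinality J (fun ε => succ (ν ε)) Υ₁)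
    (hlam : ℵ₀ ≤ lam) (hne₀ : lam.ord.cof ≠ Υ₀) (hne₁ : lam.ord.cof ≠ Υ₁)
    (hK : 2 ^ #K < lam.ord.cof) {R : K → Type u} (r : α → (ε : K) → R ε) {A : Set α}
    (hA : #A = lam) (hR : {ε | succ (ν ε) < #((r · ε) '' A)} ∈ J) :
    ∃ A' ⊆ A, #A' = lam ∧ {ε | ν ε ≤ #((r · ε) '' A')} ∈ J := by
  obtain ⟨A₁, hA₁A, hA₁, hR₁⟩ := hT₁.exists_large_subset_mk_image_lt hJ hlam hne₁ hK r hA hR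
  obtain ⟨A₂, hA₂A₁, hA₂, hR₂⟩ := hT₀.exists_large_subset_mk_image_lt hJ hlam hne₀ hK r hA₁
    (by simpa only [succ_le_iff] using hR₁)
  exact ⟨A₂, hA₂A₁.trans hA₁A, hA₂, hR₂⟩

end TrueCofinality

theorem mk_arrow_le_succ {β γ : Type u} {ν : Cardinal.{u}} (hβ : #β = ν) (hν : ℵ₀ ≤ ν)
    (hγ : #γ ≤ ν) (hgch : 2 ^ ν = succ ν) : #(β → γ) ≤ succ ν :=
  calc #(β → γ) = #γ ^ ν := by rw [← power_def, hβ]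
    _ ≤ ν ^ ν := power_le_power_right hγ
    _ = succ ν := by rw [power_self_eq hν, hgch]

theorem exists_homogeneous_of_isInaccessible {α β γ : Type u} {ν : Cardinal.{u}}
    (hν : ν.IsInaccessible) {B : Set β} (hB : #B = ν) (hγ : #γ < ν) (c : α → β → γ)
    {A : Set α} (hA : #((fun a => B.domRestrict (c a)) '' A) < ν) :
    ∃ S : Set β, #S = ν ∧ ∃ p, ∀ a ∈ A, ∀ x ∈ S, c a x = c a p := by
  set R := (fun a => B.domRestrict (c a)) '' A
  obtain ⟨col, hcol⟩ := infinite_pigeonhole (fun (x : B) (r : R) => r.1 x)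
    (hB ▸ hν.aleph0_lt.le) (by
      rw [hB, hν.isRegular.cof_ord, ← power_def]; exact hν.isStrongLimit.power_lt hγ hA)
  rw [hB] at hcol
  obtain ⟨p, hp⟩ : Set.Nonempty ((fun (x : B) (r : R) => r.1 x) ⁻¹' {col}) := by
    rw [← nonempty_coe_sort, ← mk_ne_zero_iff, hcol]; exact hν.ne_zero
  refine ⟨Subtype.val '' _, by rw [mk_image_eq Subtype.val_injective, hcol], p, ?_⟩
  rintro a ha _ ⟨x, hx, rfl⟩
  exact congrFun (hx.trans hp.symm) ⟨_, mem_image_of_mem _ ha⟩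

theorem exists_unbounded_fiber {ι γ : Type u} [LinearOrder ι] (hγ : #γ < Order.cof ι)
    {W : Set ι} (hW : Unbounded (· ≤ ·) W) (f : ι → γ) :
    ∃ i, Unbounded (· ≤ ·) {ε ∈ W | f ε = i} := by
  by_contra! h
  choose m hm using fun i => (not_unbounded_iff _).mp (h i)
  obtain ⟨x, hx⟩ := exists_forall_lt_of_mk_lt_cof (s := range m) (mk_range_le.trans_lt hγ)
  obtain ⟨ε, hεW, hε⟩ := hW x
  exact hε ((hm (f ε) ε ⟨hεW, rfl⟩).trans (hx _ (mem_range_self _)).le)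

theorem mk_biUnion_eq_of_unbounded {ι β : Type u} [LinearOrder ι] {ν : ι → Cardinal.{u}}
    {μ : Cardinal.{u}} (hν : Monotone ν) (hsup : ⨆ ε, ν ε = μ) (hβ : #β = μ) {E : Set ι}
    (hE : Unbounded (· ≤ ·) E) (S : ι → Set β) (hS : ∀ ε ∈ E, #(S ε) = ν ε) :
    #(⋃ ε ∈ E, S ε) = μ := by
  refine le_antisymm (hβ ▸ mk_set_le _) (hsup ▸ ciSup_le' fun ε => ?_)
  obtain ⟨ε', hε'E, hε'⟩ := hE ε
  calc ν ε ≤ ν ε' := hν (not_le.mp hε').le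
    _ = #(S ε') := (hS ε' hε'E).symm
    _ ≤ _ := mk_le_mk_of_subset (subset_biUnion_of_mem hε'E)

theorem exists_homogeneous_rectangle {ι α β γ : Type u} [LinearOrder ι] {lam μ : Cardinal.{u}}
    (hγ : #γ < Order.cof ι) (hlam : ℵ₀ ≤ lam) (hcolors : #γ ^ #ι < lam.ord.cof)
    {ν : ι → Cardinal.{u}} (hν : Monotone ν) (hsup : ⨆ ε, ν ε = μ) (hβ : #β = μ) {W : Set ι}
    (hW : Unbounded (· ≤ ·) W) (hinacc : ∀ ε ∈ W, (ν ε).IsInaccessible) (Bl : ι → Set β)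
    (hBl : ∀ ε, #(Bl ε) = ν ε) {A : Set α} (hA : #A = lam) (c : α → β → γ)
    (hfew : ∀ ε ∈ W, #γ < ν ε ∧ #((fun a => (Bl ε).domRestrict (c a)) '' A) < ν ε) :
    ∃ (A' : Set α) (B : Set β) (i : γ), #A' = lam ∧ #B = μ ∧ ∀ a ∈ A', ∀ b ∈ B, c a b = i := by
  have : Nonempty β := by
    obtain ⟨ε, hε, -⟩ := hW (Classical.choice (cof_ne_zero_iff.mp (ne_bot_of_gt hγ)))
    exact (mk_ne_zero_iff.mp ((hBl ε).trans_ne (hinacc ε hε).ne_zero)).map Subtype.val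
  choose! S hS p hc using fun ε hε =>
    exists_homogeneous_of_isInaccessible (hinacc ε hε) (hBl ε) (hfew ε hε).1 c (hfew ε hε).2
  obtain ⟨ω, hω⟩ := exists_mk_fiber_eq hA hlam (fun a ε => c a (p ε)) (by rwa [← power_def])
  obtain ⟨i, hi⟩ := exists_unbounded_fiber hγ hW ω
  refine ⟨_, _, i, hω, mk_biUnion_eq_of_unbounded hν hsup hβ hi S fun ε hε => hS ε hε.1, ?_⟩
  rintro a ⟨ha, hωa⟩ b hb
  obtain ⟨ε, ⟨hεW, hωε⟩, hbε⟩ := mem_iUnion₂.mp hb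
  rw [hc ε hεW a ha b hbε, ← hωε, ← hωa]

theorem stmt11_general (κ μ lam θ : Cardinal)
    (hcofμ : μ.ord.cof = κ) (hθ : θ < κ)
    (h2κ : 2 ^ κ < lam.ord.cof)
    (J : Set (Set (OT κ))) (hJ : IsIdealOn (OT κ) J)
    (hbd : ∀ s : Set (OT κ), Set.Bounded (· ≤ ·) s → s ∈ J)
    (lamseq : OT κ → Cardinal) (hinc : StrictMono lamseq)
    (hsup : (⨆ ε, lamseq ε) = μ)
    (hinacc : ∀ ε, (lamseq ε).IsInaccessible)
    (hgch : ∀ ε, 2 ^ lamseq ε = Order.succ (lamseq ε))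
    (Υ0 Υ1 : Cardinal)
    (hT0 : IsTrueCofinality J (fun ε => lamseq ε) Υ0)
    (hT1 : IsTrueCofinality J (fun ε => Order.succ (lamseq ε)) Υ1)
    (hne0 : lam.ord.cof ≠ Υ0) (hne1 : lam.ord.cof ≠ Υ1) :
    ∀ c : OT lam → OT μ → OT θ,
      ∃ (A : Set (OT lam)) (B : Set (OT μ)) (i : OT θ),
        #A = lam ∧ #B = μ ∧ ∀ α ∈ A, ∀ β ∈ B, c α β = i := by
  intro c
  have hle_μ : ∀ ε, lamseq ε ≤ μ := fun ε => hsup ▸ le_ciSup bddAbove_of_small ε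
  obtain ⟨ε₀, hε₀⟩ : ∃ ε₀, θ < lamseq ε₀ :=
    exists_lt_of_lt_ciSup' (hsup ▸ hθ.trans_le (hcofμ ▸ Ordinal.cof_ord_le μ))
  have hκ : κ.IsRegular :=
    hcofμ ▸ isRegular_cof (isSuccLimit_ord ((hinacc ε₀).aleph0_lt.le.trans (hle_μ ε₀)))
  have hlam : ℵ₀ ≤ lam :=
    hκ.aleph0_le.trans ((cantor κ).le.trans (h2κ.le.trans (Ordinal.cof_ord_le lam)))
  have hsmall : {ε | lamseq ε ≤ θ} ∈ J :=
    hbd _ ⟨ε₀, fun ε hε => not_lt.mp fun h => (hε.trans_lt hε₀).not_ge (hinc h).le⟩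
  choose Bl hBl using fun ε => le_mk_iff_exists_set.mp ((hle_μ ε).trans_eq (mk_ord_toType μ).symm)
  let row : OT lam → (ε : OT κ) → (Bl ε → OT θ) := fun a ε => (Bl ε).domRestrict (c a)
  have hrows : {ε | succ (lamseq ε) < #((row · ε) '' univ)} ⊆ {ε | lamseq ε ≤ θ} :=
    fun ε hε => not_lt.mp fun hθε => (show succ (lamseq ε) < _ from hε).not_ge <|
      (mk_set_le _).trans (mk_arrow_le_succ (hBl ε) (hinacc ε).aleph0_lt.le
        (by rw [mk_ord_toType]; exact hθε.le) (hgch ε))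
  obtain ⟨A, -, hA, hfew⟩ := hT0.exists_large_subset_mk_image_lt_of_succ hJ hT1 hlam hne0 hne1
    (by rwa [mk_ord_toType]) row (by rw [mk_univ, mk_ord_toType]) (hJ.mono hrows hsmall)
  refine exists_homogeneous_rectangle (by rwa [mk_ord_toType, hκ.cof_toType]) hlam ?_
    hinc.monotone hsup (mk_ord_toType μ) (hJ.unbounded_compl hbd (hJ.union_mem hfew hsmall))
    (fun ε _ => hinacc ε) Bl hBl hA c fun ε hε => ?_
  · rw [mk_ord_toType, mk_ord_toType]
    exact (power_le_power_right hθ.le).trans_lt ((power_self_eq hκ.aleph0_le).trans_lt h2κ)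
  · simp only [mem_compl_iff, mem_union, mem_ofPred_eq, not_or, not_le] at hε
    exact ⟨by rw [mk_ord_toType]; exact hε.2, hε.1⟩

/-- polarized relation above a singular cardinal, from pcf assumptions. -/
theorem stmt11 (κ μ lam θ : Cardinal)
    (h1 : κ < μ) (h2 : μ < lam) (hcofμ : μ.ord.cof = κ) (hθ : θ < κ)
    (h2κ : 2 ^ κ < lam.ord.cof)
    (J : Set (Set (OT κ))) (hJ : IsIdealOn (OT κ) J)
    (hbd : ∀ s : Set (OT κ), Set.Bounded (· ≤ ·) s → s ∈ J)
    (lamseq : OT κ → Cardinal) (hinc : StrictMono lamseq)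
    (hsup : (⨆ ε, lamseq ε) = μ)
    (hinacc : ∀ ε, (lamseq ε).IsInaccessible)
    (hgch : ∀ ε, 2 ^ lamseq ε = Order.succ (lamseq ε))
    (Υ0 Υ1 : Cardinal)
    (hT0 : IsTrueCofinality J (fun ε => lamseq ε) Υ0)
    (hT1 : IsTrueCofinality J (fun ε => Order.succ (lamseq ε)) Υ1)
    (hne0 : lam.ord.cof ≠ Υ0) (hne1 : lam.ord.cof ≠ Υ1) :
    ∀ c : OT lam → OT μ → OT θ,
      ∃ (A : Set (OT lam)) (B : Set (OT μ)) (i : OT θ),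
        #A = lam ∧ #B = μ ∧ ∀ α ∈ A, ∀ β ∈ B, c α β = i :=
  stmt11_general κ μ lam θ hcofμ hθ h2κ J hJ hbd lamseq hinc hsup hinacc hgch Υ0 Υ1 hT0 hT1 hne0
    hne1
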